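/- Perfect reconstruction of the two-channel spectral-sampling spline graph filter bank: suppose U₀ is an N×N real orthogonal matrix, U₁ is an (N/2)×(N/2) real matrix with U₁ᵀ U₁ = I_{N/2}, and ψ_n · ψ_{N-1-n} ≠ 1 for all n ∈ {0, ..., N/2 - 1}. Let H̄_LP = (1/2)(I_N + Ψ), H̄_HP = I_N - H̄_LP, and H̄_INV = Ψ̃ (I_N - J_N Ψ) with Ψ̃ = diag(1/(1 - ψ_n ψ_{N-1-n}))_{n=0}^{N-1}. Then for every signal f ∈ ℝ^N, the filter bank output f_out = U₀ H̄_INV (S̄_uLP U₁ᵀ U₁ S̄_dLP H̄_LP + S̄_uHP U₁ᵀ U₁ S̄_dHP H̄_HP) U₀ᵀ f equals f. -/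

import Mathlib

open Matrix

/-- The `n × n` exchange (counter-identity) matrix, with ones on the anti-diagonal. -/
noncomputable def exchMat (n : ℕ) : Matrix (Fin n) (Fin n) ℝ :=
  Matrix.of fun i j => if (i : ℕ) + (j : ℕ) = n - 1 then (1 : ℝ) else 0

/-- The low-pass downsampling matrix `S̄_dLP = [I_{N/2}  J_{N/2}]`, an `(N/2) × N` block
matrix (columns reindexed from `Fin (N/2) ⊕ Fin (N/2)` to `Fin N`). -/
noncomputable def SdLP (N : ℕ) (h : N / 2 + N / 2 = N) :
    Matrix (Fin (N / 2)) (Fin N) ℝ :=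
  (Matrix.fromCols (1 : Matrix (Fin (N / 2)) (Fin (N / 2)) ℝ)
    (exchMat (N / 2))).submatrix id (finSumFinEquiv.trans (finCongr h)).symm

/-- The high-pass downsampling matrix `S̄_dHP = [I_{N/2}  -J_{N/2}]`. -/
noncomputable def SdHP (N : ℕ) (h : N / 2 + N / 2 = N) :
    Matrix (Fin (N / 2)) (Fin N) ℝ :=
  (Matrix.fromCols (1 : Matrix (Fin (N / 2)) (Fin (N / 2)) ℝ)
    (-exchMat (N / 2))).submatrix id (finSumFinEquiv.trans (finCongr h)).symm

/-
Folding by `S̄_d{LP,HP}` followed by unfolding gives `S̄_dᵀ S̄_d = I ± J_N`, so, once `U₁ᵀ U₁ = I`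
is absorbed, the two channels sum to `(I + J)(I + Ψ)/2 + (I - J)(I - Ψ)/2 = I + J Ψ`. Since
`J Ψ J = diag(ψ_{N-1-n})`, the product `(I - J Ψ)(I + J Ψ) = I - (J Ψ)²` is the diagonal matrix
`diag(1 - ψ_n ψ_{N-1-n})`, which `Ψ̃` inverts; finally `U₀ U₀ᵀ = I`.
-/

lemma exchMat_eq_toMatrix_revPerm (n : ℕ) :
    exchMat n = (Fin.revPerm : Equiv.Perm (Fin n)).toPEquiv.toMatrix := by
  ext i j
  simp only [exchMat, of_apply, PEquiv.toMatrix_apply, Equiv.toPEquiv_apply, Option.mem_some_iff,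
    Fin.revPerm_apply, Fin.ext_iff, Fin.val_rev]
  exact if_congr (by omega) rfl rfl

lemma exchMat_mul {n : ℕ} (M : Matrix (Fin n) (Fin n) ℝ) :
    exchMat n * M = M.submatrix Fin.rev id := by
  rw [exchMat_eq_toMatrix_revPerm, PEquiv.toMatrix_toPEquiv_mul]
  rfl

lemma mul_exchMat {n : ℕ} (M : Matrix (Fin n) (Fin n) ℝ) :
    M * exchMat n = M.submatrix id Fin.rev := by
  rw [exchMat_eq_toMatrix_revPerm, PEquiv.mul_toMatrix_toPEquiv, Fin.revPerm_symm]
  rfl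

lemma exchMat_mul_exchMat (n : ℕ) : exchMat n * exchMat n = 1 := by
  rw [exchMat_mul, exchMat_eq_toMatrix_revPerm, ← PEquiv.toMatrix_refl]
  ext i j
  simp [PEquiv.toMatrix_apply]

lemma exchMat_transpose (n : ℕ) : (exchMat n)ᵀ = exchMat n := by
  ext i j
  simp [exchMat, add_comm]

lemma exchMat_mul_diagonal_mul_exchMat {n : ℕ} (d : Fin n → ℝ) :
    exchMat n * diagonal d * exchMat n = diagonal (fun i => d i.rev) := by
  rw [mul_exchMat, exchMat_mul]
  ext i j
  simp [diagonal_apply, Fin.rev_eq_iff]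

section Halves

variable {m N : ℕ} (h : m + m = N)

lemma submatrix_exchMat_finSumFinEquiv :
    (exchMat N).submatrix (finSumFinEquiv.trans (finCongr h)) (finSumFinEquiv.trans (finCongr h))
      = fromBlocks 0 (exchMat m) (exchMat m) 0 := by
  ext (i | i) (j | j) <;>
    simp only [exchMat, submatrix_apply, Equiv.trans_apply, finSumFinEquiv_apply_left,
      finSumFinEquiv_apply_right, finCongr_apply, of_apply, Fin.val_cast, Fin.val_castAdd,
      Fin.val_natAdd, fromBlocks_apply₁₁, fromBlocks_apply₁₂, fromBlocks_apply₂₁,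
      fromBlocks_apply₂₂, Matrix.zero_apply] <;>
    grind

lemma submatrix_one_add_smul_exchMat_finSumFinEquiv (c : ℝ) :
    (1 + c • exchMat N).submatrix (finSumFinEquiv.trans (finCongr h))
        (finSumFinEquiv.trans (finCongr h))
      = fromBlocks 1 (c • exchMat m) (c • exchMat m) 1 := by
  change (1 : Matrix (Fin N) (Fin N) ℝ).submatrix _ _ + c • (exchMat N).submatrix _ _ = _
  rw [submatrix_one_equiv, submatrix_exchMat_finSumFinEquiv, ← fromBlocks_one, fromBlocks_smul,
    fromBlocks_add]
  simp

end Halves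

lemma transpose_mul_self_fromCols_submatrix {ι ι₁ ι₂ κ R : Type*} [Fintype ι] [Semiring R]
    (A : Matrix ι ι₁ R) (B : Matrix ι ι₂ R) (e : ι₁ ⊕ ι₂ ≃ κ) :
    ((fromCols A B).submatrix id e.symm)ᵀ * (fromCols A B).submatrix id e.symm
      = (fromBlocks (Aᵀ * A) (Aᵀ * B) (Bᵀ * A) (Bᵀ * B)).submatrix e.symm e.symm := by
  rw [transpose_submatrix, ← submatrix_mul _ _ _ id _ Function.bijective_id, transpose_fromCols,
    fromRows_mul_fromCols]

lemma SdLP_transpose_mul_self (N : ℕ) (h : N / 2 + N / 2 = N) :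
    (SdLP N h)ᵀ * SdLP N h = 1 + exchMat N := by
  rw [SdLP, transpose_mul_self_fromCols_submatrix, transpose_one, exchMat_transpose]
  simp only [mul_one, one_mul, exchMat_mul_exchMat]
  rw [← one_smul ℝ (exchMat _), ← submatrix_one_add_smul_exchMat_finSumFinEquiv h,
    submatrix_submatrix, Equiv.self_comp_symm, submatrix_id_id, one_smul]

lemma SdHP_transpose_mul_self (N : ℕ) (h : N / 2 + N / 2 = N) :
    (SdHP N h)ᵀ * SdHP N h = 1 - exchMat N := by
  rw [SdHP, transpose_mul_self_fromCols_submatrix, transpose_one, transpose_neg, exchMat_transpose]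
  simp only [mul_one, one_mul, neg_mul_neg, exchMat_mul_exchMat]
  rw [← neg_one_smul ℝ (exchMat _), ← submatrix_one_add_smul_exchMat_finSumFinEquiv h,
    submatrix_submatrix, Equiv.self_comp_symm, submatrix_id_id, neg_one_smul, sub_eq_add_neg]

lemma exchMat_mul_diagonal_mul_self {n : ℕ} (d : Fin n → ℝ) :
    exchMat n * diagonal d * (exchMat n * diagonal d) = diagonal (fun i => d i * d i.rev) := by
  rw [← mul_assoc, exchMat_mul_diagonal_mul_exchMat, diagonal_mul_diagonal]
  exact congrArg diagonal (funext fun i => mul_comm _ _)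

lemma diagonal_mul_one_sub_mul_one_add_exchMat_mul_diagonal {n : ℕ} (d : Fin n → ℝ)
    (hd : ∀ i, d i * d i.rev ≠ 1) :
    diagonal (fun i => 1 / (1 - d i * d i.rev)) * (1 - exchMat n * diagonal d)
      * (1 + exchMat n * diagonal d) = 1 := by
  have hfactor : (1 - exchMat n * diagonal d) * (1 + exchMat n * diagonal d)
      = 1 - exchMat n * diagonal d * (exchMat n * diagonal d) := by
    noncomm_ring
  rw [mul_assoc, hfactor, exchMat_mul_diagonal_mul_self, ← diagonal_one, diagonal_sub,
    diagonal_mul_diagonal]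
  congr 1
  funext i
  exact one_div_mul_cancel (sub_ne_zero.mpr (hd i).symm)

lemma one_add_mul_half_smul_add_one_sub_mul {A : Type*} [Ring A] [Algebra ℝ A] (J P : A) :
    (1 + J) * ((1 / 2 : ℝ) • (1 + P)) + (1 - J) * (1 - (1 / 2 : ℝ) • (1 + P)) = 1 + J * P := by
  simp only [mul_smul_comm, mul_add, add_mul, sub_mul, mul_sub, mul_one, one_mul]
  module

lemma Fin.forall_of_forall_lt_half {N : ℕ} (h : N / 2 + N / 2 = N) {p : Fin N → Prop}
    (hrev : ∀ n, p n.rev → p n) (hp : ∀ n : Fin N, (n : ℕ) < N / 2 → p n) (n : Fin N) : p n := by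
  rcases lt_or_ge (n : ℕ) (N / 2) with hn | hn
  · exact hp n hn
  · exact hrev n (hp n.rev (by rw [Fin.val_rev]; omega))

theorem stmt11_general (N : ℕ) (h : N / 2 + N / 2 = N)
    (ψ : Fin N → ℝ)
    (U0 : Matrix (Fin N) (Fin N) ℝ) (hU0 : U0 * U0ᵀ = 1)
    (U1 : Matrix (Fin (N / 2)) (Fin (N / 2)) ℝ) (hU1 : U1ᵀ * U1 = 1)
    (hψ : ∀ n : Fin N, (n : ℕ) < N / 2 → ψ n * ψ n.rev ≠ 1)
    (f : Fin N → ℝ) :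
    (U0 *
        (Matrix.diagonal (fun n => 1 / (1 - ψ n * ψ n.rev)) *
          ((1 : Matrix (Fin N) (Fin N) ℝ) - exchMat N * Matrix.diagonal ψ)) *
        ((SdLP N h)ᵀ * U1ᵀ * U1 * SdLP N h *
            ((1 / 2 : ℝ) • ((1 : Matrix (Fin N) (Fin N) ℝ) + Matrix.diagonal ψ)) +
          (SdHP N h)ᵀ * U1ᵀ * U1 * SdHP N h *
            ((1 : Matrix (Fin N) (Fin N) ℝ) -
              (1 / 2 : ℝ) • ((1 : Matrix (Fin N) (Fin N) ℝ) + Matrix.diagonal ψ))) *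
        U0ᵀ).mulVec f = f := by
  have hψ_all : ∀ n : Fin N, ψ n * ψ n.rev ≠ 1 :=
    Fin.forall_of_forall_lt_half h (fun n hn => by rwa [Fin.rev_rev, mul_comm] at hn) hψ
  have hLP : (SdLP N h)ᵀ * U1ᵀ * U1 * SdLP N h = 1 + exchMat N := by
    rw [Matrix.mul_assoc _ U1ᵀ, hU1, Matrix.mul_one, SdLP_transpose_mul_self]
  have hHP : (SdHP N h)ᵀ * U1ᵀ * U1 * SdHP N h = 1 - exchMat N := by
    rw [Matrix.mul_assoc _ U1ᵀ, hU1, Matrix.mul_one, SdHP_transpose_mul_self]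
  rw [hLP, hHP, one_add_mul_half_smul_add_one_sub_mul, mul_assoc U0,
    diagonal_mul_one_sub_mul_one_add_exchMat_mul_diagonal ψ hψ_all, mul_one, hU0, one_mulVec]

/-- Perfect reconstruction of the two-channel spectral-sampling spline graph filter bank:
if `U₀` is orthogonal, `U₁ᵀ U₁ = I_{N/2}`, and `ψ_n ψ_{N-1-n} ≠ 1` for `n < N/2`, then with
`H̄_LP = (1/2)(I_N + Ψ)`, `H̄_HP = I_N - H̄_LP`, `H̄_INV = Ψ̃ (I_N - J_N Ψ)`,
`f_out = U₀ H̄_INV (S̄_uLP U₁ᵀ U₁ S̄_dLP H̄_LP + S̄_uHP U₁ᵀ U₁ S̄_dHP H̄_HP) U₀ᵀ f = f`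
for every signal `f`. -/
theorem stmt11 (N : ℕ) (hN : 0 < N) (hNe : Even N) (h : N / 2 + N / 2 = N)
    (ψ : Fin N → ℝ)
    (U0 : Matrix (Fin N) (Fin N) ℝ) (hU0 : U0 * U0ᵀ = 1) (hU0' : U0ᵀ * U0 = 1)
    (U1 : Matrix (Fin (N / 2)) (Fin (N / 2)) ℝ) (hU1 : U1ᵀ * U1 = 1)
    (hψ : ∀ n : Fin N, (n : ℕ) < N / 2 → ψ n * ψ n.rev ≠ 1)
    (f : Fin N → ℝ) :
    (U0 *
        (Matrix.diagonal (fun n => 1 / (1 - ψ n * ψ n.rev)) *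
          ((1 : Matrix (Fin N) (Fin N) ℝ) - exchMat N * Matrix.diagonal ψ)) *
        ((SdLP N h)ᵀ * U1ᵀ * U1 * SdLP N h *
            ((1 / 2 : ℝ) • ((1 : Matrix (Fin N) (Fin N) ℝ) + Matrix.diagonal ψ)) +
          (SdHP N h)ᵀ * U1ᵀ * U1 * SdHP N h *
            ((1 : Matrix (Fin N) (Fin N) ℝ) -
              (1 / 2 : ℝ) • ((1 : Matrix (Fin N) (Fin N) ℝ) + Matrix.diagonal ψ))) *
        U0ᵀ).mulVec f = f :=
  stmt11_general N h ψ U0 hU0 U1 hU1 hψ f
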